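/- arXiv:2603.09900 — 2 statements merged into one kernel-verified Lean document; each statement's English description precedes it below -/
import Mathlib

section
/- In a maxiconsistent base M, support satisfies the classical negation law: M supports ¬φ if and only if M does not support φ, for every closed formula φ. -/
namespace PTS

/-- An atomic rule: finitely many atomic premises and an atomic conclusion. -/
structure ARule (Atom : Type) where
  prems : List Atom
  concl : Atom

/-- A base is a set of atomic rules. -/
abbrev Base (Atom : Type) := Set (ARule Atom)

/-- Atomic derivability from a base, closing the rules under application. -/
inductive ADeriv {Atom : Type} (B : Base Atom) : Atom → Prop
  | app (r : ARule Atom) (hr : r ∈ B) (h : ∀ p ∈ r.prems, ADeriv B p) : ADeriv B r.concl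

/-- Closed formulas over atoms `Atom` and closed terms `TermC`; the universal
quantifier is represented by its family of closed-term instances. -/
inductive Fml (Atom TermC : Type) : Type
  | atom : Atom → Fml Atom TermC
  | falsum : Fml Atom TermC
  | and : Fml Atom TermC → Fml Atom TermC → Fml Atom TermC
  | imp : Fml Atom TermC → Fml Atom TermC → Fml Atom TermC
  | all : (TermC → Fml Atom TermC) → Fml Atom TermC

/-- The support relation. -/
def Spt {Atom TermC : Type} (B : Base Atom) : Fml Atom TermC → Prop
  | .atom a => ADeriv B a
  | .falsum => ∀ a : Atom, ADeriv B a
  | .and φ ψ => Spt B φ ∧ Spt B ψ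
  | .imp φ ψ => ∀ C : Base Atom, B ⊆ C → Spt C φ → Spt C ψ
  | .all f => ∀ t : TermC, Spt B (f t)

def Fml.neg {Atom TermC : Type} (φ : Fml Atom TermC) : Fml Atom TermC := φ.imp .falsum

def Fml.or {Atom TermC : Type} (φ ψ : Fml Atom TermC) : Fml Atom TermC := (φ.neg.and ψ.neg).neg

def Fml.ex {Atom TermC : Type} (f : TermC → Fml Atom TermC) : Fml Atom TermC :=
  (Fml.all fun t => (f t).neg).neg

/-- A base is consistent when it does not support `⊥`. -/
def Consistent (Atom TermC : Type) (B : Base Atom) : Prop :=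
  ¬ Spt B (Fml.falsum : Fml Atom TermC)

/-- A maxiconsistent base: consistent, and every proper extension is inconsistent. -/
def Maxiconsistent (Atom TermC : Type) (B : Base Atom) : Prop :=
  Consistent Atom TermC B ∧ ∀ C : Base Atom, B ⊆ C → C ≠ B → ¬ Consistent Atom TermC C

end PTS

open PTS

theorem maxiconsistent_neg_iff {Atom TermC : Type} {M : Base Atom}
    (hM : Maxiconsistent Atom TermC M) (φ : Fml Atom TermC) :
    Spt M φ.neg ↔ ¬ Spt M φ := by
  constructor
  · intro h hφ
    exact hM.1 (h M (fun x hx => hx) hφ)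
  · intro h C hMC hCφ
    by_cases hc : C = M
    · exact absurd (hc ▸ hCφ) h
    · exact not_not.mp (hM.2 C hMC hc)
end

section
/- Every base B with a closed formula φ not supported by B can be extended to a maxiconsistent base M ⊇ B such that M still does not support φ. -/
open PTS

section Aux
open PTS
variable {Atom TermC : Type}

theorem ADeriv.mono {B C : Base Atom} (h : B ⊆ C) {a : Atom} (hd : ADeriv B a) :
    ADeriv C a := by
  induction hd with
  | app r hr hp ih => exact ADeriv.app r (h hr) ih

theorem Spt.mono : ∀ {ψ : Fml Atom TermC} {B C : Base Atom}, B ⊆ C → Spt B ψ → Spt C ψ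
  | .atom a, B, C, h, hs => ADeriv.mono h hs
  | .falsum, B, C, h, hs => fun a => ADeriv.mono h (hs a)
  | .and α β, B, C, h, hs => ⟨Spt.mono h hs.1, Spt.mono h hs.2⟩
  | .imp α β, B, C, h, hs => fun E hCE hα => hs E (h.trans hCE) hα
  | .all f, B, C, h, hs => fun t => Spt.mono h (hs t)

theorem Spt.explode : ∀ (ψ : Fml Atom TermC) (C : Base Atom),
    Spt C (Fml.falsum : Fml Atom TermC) → Spt C ψ
  | .atom a, C, hf => hf a
  | .falsum, C, hf => hf
  | .and α β, C, hf => ⟨Spt.explode α C hf, Spt.explode β C hf⟩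
  | .imp α β, C, hf => fun E hCE _ => Spt.explode β E (Spt.mono hCE hf)
  | .all f, C, hf => fun t => Spt.explode (f t) C hf

/-- The canonical base associated to a set of atoms. -/
def Mk (D : Set Atom) : Base Atom :=
  {r | r.concl ∈ D ∨ ∃ p ∈ r.prems, p ∉ D}

/-- `D` is closed under the rules of `X`. -/
def BClosed (X : Base Atom) (D : Set Atom) : Prop :=
  ∀ r ∈ X, (∀ p ∈ r.prems, p ∈ D) → r.concl ∈ D

theorem aderiv_sub_of_closed {X : Base Atom} {D : Set Atom} (h : BClosed X D)
    {a : Atom} (hd : ADeriv X a) : a ∈ D := by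
  induction hd with
  | app r hr hp ih => exact h r hr ih

theorem closed_closure (X : Base Atom) : BClosed X {a | ADeriv X a} :=
  fun r hr hp => ADeriv.app r hr hp

theorem mem_of_aderiv_mk {D : Set Atom} {a : Atom} (hd : ADeriv (Mk D) a) : a ∈ D := by
  refine aderiv_sub_of_closed (fun r hr hp => ?_) hd
  rcases hr with h | ⟨p, hp', hnp⟩
  · exact h
  · exact absurd (hp p hp') hnp

theorem aderiv_mk_of_mem {D : Set Atom} {a : Atom} (ha : a ∈ D) : ADeriv (Mk D) a :=
  ADeriv.app ⟨[], a⟩ (Or.inl ha) (by simp)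

/-- If an extension of `Mk D` derives an atom outside `D`, it derives everything. -/
theorem blow {D : Set Atom} {E : Base Atom} (hE : Mk D ⊆ E) {c : Atom}
    (hc : ADeriv E c) (hcD : c ∉ D) (a : Atom) : ADeriv E a := by
  have hr : (⟨[c], a⟩ : ARule Atom) ∈ Mk D := by
    by_cases ha : a ∈ D
    · exact Or.inl ha
    · exact Or.inr ⟨c, by simp, hcD⟩
  exact ADeriv.app ⟨[c], a⟩ (hE hr) (by simpa using hc)

theorem union_aderiv_sub {D : Set Atom} {E C : Base Atom} (hE : Mk D ⊆ E) (hC : Mk D ⊆ C)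
    (hEd : ∀ a, ADeriv E a → a ∈ D) (hCd : ∀ a, ADeriv C a → a ∈ D) :
    ∀ a, ADeriv (E ∪ C) a → a ∈ D := by
  intro a hd
  induction hd with
  | app r hr hp ih =>
    have hprem : ∀ X : Base Atom, Mk D ⊆ X → ∀ p ∈ r.prems, ADeriv X p := fun X hX p hp' =>
      ADeriv.mono hX (aderiv_mk_of_mem (ih p hp'))
    rcases hr with hr | hr
    · exact hEd _ (ADeriv.app r hr (hprem E hE))
    · exact hCd _ (ADeriv.app r hr (hprem C hC))

/-- Support over a consistent-closure extension of `Mk D` descends to `Mk D`. -/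
theorem spt_down {D : Set Atom} : ∀ (ψ : Fml Atom TermC) (C : Base Atom), Mk D ⊆ C →
    (∀ a, ADeriv C a → a ∈ D) → Spt C ψ → Spt (Mk D) ψ
  | .atom a, C, hC, hCd, hs => aderiv_mk_of_mem (hCd a hs)
  | .falsum, C, hC, hCd, hs => fun a => aderiv_mk_of_mem (hCd a (hs a))
  | .and α β, C, hC, hCd, hs =>
      ⟨spt_down α C hC hCd hs.1, spt_down β C hC hCd hs.2⟩
  | .all f, C, hC, hCd, hs => fun t => spt_down (f t) C hC hCd (hs t)
  | .imp α β, C, hC, hCd, hs => by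
      intro E hE hα
      by_cases hEd : ∀ a, ADeriv E a → a ∈ D
      · have hE' : Spt (E ∪ C) β :=
          hs (E ∪ C) Set.subset_union_right
            (Spt.mono Set.subset_union_left hα)
        have h1 : Mk D ⊆ E ∪ C := hE.trans Set.subset_union_left
        have h2 := union_aderiv_sub hE hC hEd hCd
        exact Spt.mono hE (spt_down β (E ∪ C) h1 h2 hE')
      · push_neg at hEd
        obtain ⟨c, hc, hcD⟩ := hEd
        exact Spt.explode β E (blow hE hc hcD)

/-- Key lemma: if `ψ` is supported by every canonical base over a `B`-closed set,
then it is supported by `B`. -/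
theorem spt_of_forall_mk : ∀ (ψ : Fml Atom TermC) (B : Base Atom),
    (∀ D : Set Atom, BClosed B D → Spt (Mk D) ψ) → Spt B ψ
  | .atom a, B, H => mem_of_aderiv_mk (H _ (closed_closure B))
  | .falsum, B, H => fun a => mem_of_aderiv_mk (H _ (closed_closure B) a)
  | .and α β, B, H =>
      ⟨spt_of_forall_mk α B (fun D hD => (H D hD).1),
       spt_of_forall_mk β B (fun D hD => (H D hD).2)⟩
  | .all f, B, H => fun t => spt_of_forall_mk (f t) B (fun D hD => H D hD t)
  | .imp α β, B, H => by
      intro C hBC hα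
      refine spt_of_forall_mk β C (fun D hD => ?_)
      have hDB : BClosed B D := fun r hr => hD r (hBC hr)
      have hsub : Mk D ⊆ C ∪ Mk D := Set.subset_union_right
      have hcl : ∀ a, ADeriv (C ∪ Mk D) a → a ∈ D := by
        intro a hd
        refine aderiv_sub_of_closed (fun r hr hp => ?_) hd
        rcases hr with hr | hr
        · exact hD r hr hp
        · rcases hr with h | ⟨p, hp', hnp⟩
          · exact h
          · exact absurd (hp p hp') hnp
      have hα' : Spt (Mk D) α :=
        spt_down α (C ∪ Mk D) hsub hcl (Spt.mono Set.subset_union_left hα)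
      exact H D hDB (Mk D) (le_refl _) hα'

end Aux


theorem maxiconsistent_extension {Atom TermC : Type} [Countable Atom]
    {B : Base Atom} {φ : Fml Atom TermC} (h : ¬ Spt B φ) :
    ∃ M : Base Atom, B ⊆ M ∧ Maxiconsistent Atom TermC M ∧ ¬ Spt M φ := by
  by_contra hno
  push_neg at hno
  have H : ∀ D : Set Atom, BClosed B D → Spt (Mk D) φ := by
    intro D hD
    by_contra hns
    have hBM : B ⊆ Mk D := by
      intro r hr
      by_cases hp : ∀ p ∈ r.prems, p ∈ D
      · exact Or.inl (hD r hr hp)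
      · push_neg at hp
        exact Or.inr hp
    have hcons : Consistent Atom TermC (Mk D) := by
      intro hf
      exact hns (Spt.explode φ _ hf)
    apply hns
    refine hno (Mk D) hBM ⟨hcons, ?_⟩
    intro C hMC hne hCcons
    have : ∃ r ∈ C, r ∉ Mk D := by
      by_contra hall
      push_neg at hall
      exact hne (Set.Subset.antisymm hall hMC)
    obtain ⟨r, hrC, hrM⟩ := this
    simp only [Mk, Set.mem_setOf_eq, not_or, not_exists] at hrM
    obtain ⟨hcon, hprem⟩ := hrM
    have hprem' : ∀ p ∈ r.prems, p ∈ D := by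
      intro p hp
      by_contra hpd
      exact hprem p ⟨hp, hpd⟩
    have hder : ADeriv C r.concl :=
      ADeriv.app r hrC (fun p hp => ADeriv.mono hMC (aderiv_mk_of_mem (hprem' p hp)))
    exact hCcons (blow hMC hder hcon)
  exact h (spt_of_forall_mk φ B H)
end
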